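/- The concatenation Γ ∗ Γ′ of a λ-chain Γ and a λ′-chain Γ′ is a (λ+λ′)-chain. In particular, for each index ι′ in the second segment and each positive root α, N^{Γ∗Γ′}_{ι′}(α) = ⟨λ, α^∨⟩ + N^{Γ′}_{ι′}(α), and the interchange condition N^{Γ∗Γ′}_ι(γ) = N^{Γ∗Γ′}_ι(α) + p·N^{Γ∗Γ′}_ι(β) holds whenever γ^∨ = α^∨ + p·β^∨ and β is the root at position ι. -/

import Mathlib

/-- `Ncount Γ k δ` = `N^Γ_k(δ)`, the number of occurrences of the root `δ`
among the first `k` entries of the chain `Γ` (i.e. before position `k`). -/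
def Ncount {R : Type} [DecidableEq R] (Γ : List R) (k : ℕ) (δ : R) : ℕ :=
  (Γ.take k).count δ

/-- `Γ` is a `λ`-chain for the weight functional `lam` on the coroot lattice `Q`:
every root `α` occurs exactly `⟨λ, α^∨⟩` times, and whenever
`γ^∨ = α^∨ + p β^∨` with `α ≠ β`, the interchange condition
`N^Γ_k(γ) = N^Γ_k(α) + p N^Γ_k(β)` holds at every position `k` carrying `β`. -/
def IsLamChain {R Q : Type} [DecidableEq R] [AddCommGroup Q]
    (coroot : R → Q) (lam : Q →+ ℤ) (Γ : List R) : Prop :=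
  (∀ α : R, (Γ.count α : ℤ) = lam (coroot α)) ∧
  (∀ (α β γ : R) (p : ℤ), α ≠ β → coroot γ = coroot α + p • coroot β →
    ∀ k : ℕ, Γ[k]? = some β →
      (Ncount Γ k γ : ℤ) = (Ncount Γ k α : ℤ) + p * (Ncount Γ k β : ℤ))

/-! Before a position in the second segment, the counts in `Γ ++ Γ'` are those of `Γ'` shifted by
the full counts `⟨λ, α^∨⟩` of `Γ`; by linearity of `λ` these shifts satisfy the interchange
relation themselves, so it passes from `Γ'` to the concatenation. -/

section Ncount

variable {R : Type} [DecidableEq R]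

theorem Ncount_append_of_le_length (Γ Γ' : List R) {k : ℕ} (hk : k ≤ Γ.length) (δ : R) :
    Ncount (Γ ++ Γ') k δ = Ncount Γ k δ := by
  simp [Ncount, List.take_append_of_le_length hk]

theorem Ncount_append_length_add (Γ Γ' : List R) (k : ℕ) (δ : R) :
    Ncount (Γ ++ Γ') (Γ.length + k) δ = Γ.count δ + Ncount Γ' k δ := by
  simp [Ncount, List.take_append, List.count_append, List.take_of_length_le]

end Ncount

namespace IsLamChain

variable {R Q : Type} [DecidableEq R] [AddCommGroup Q] {coroot : R → Q} {lam lam' : Q →+ ℤ}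
  {Γ Γ' : List R}

theorem count_eq_add_mul (hΓ : IsLamChain coroot lam Γ) {α β γ : R} {p : ℤ}
    (h : coroot γ = coroot α + p • coroot β) :
    (Γ.count γ : ℤ) = Γ.count α + p * Γ.count β := by
  rw [hΓ.1, hΓ.1, hΓ.1, h, map_add, map_zsmul, smul_eq_mul]

theorem Ncount_append_length_add (hΓ : IsLamChain coroot lam Γ) (Γ' : List R) (k : ℕ) (δ : R) :
    (Ncount (Γ ++ Γ') (Γ.length + k) δ : ℤ) = lam (coroot δ) + Ncount Γ' k δ := by
  rw [_root_.Ncount_append_length_add, Nat.cast_add, hΓ.1]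

theorem interchange_append (hΓ : IsLamChain coroot lam Γ) (hΓ' : IsLamChain coroot lam' Γ')
    {α β γ : R} {p : ℤ} (hαβ : α ≠ β) (h : coroot γ = coroot α + p • coroot β) {k : ℕ}
    (hk : (Γ ++ Γ')[k]? = some β) :
    (Ncount (Γ ++ Γ') k γ : ℤ)
      = Ncount (Γ ++ Γ') k α + p * Ncount (Γ ++ Γ') k β := by
  rcases lt_or_ge k Γ.length with hlt | hge
  · simp only [Ncount_append_of_le_length Γ Γ' hlt.le]
    rw [List.getElem?_append_left hlt] at hk
    exact hΓ.2 α β γ p hαβ h k hk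
  · obtain ⟨j, rfl⟩ := Nat.exists_eq_add_of_le hge
    rw [List.getElem?_append_right hge, Nat.add_sub_cancel_left] at hk
    simp only [_root_.Ncount_append_length_add, Nat.cast_add]
    rw [hΓ.count_eq_add_mul h, hΓ'.2 α β γ p hαβ h j hk]
    ring

theorem append (hΓ : IsLamChain coroot lam Γ) (hΓ' : IsLamChain coroot lam' Γ') :
    IsLamChain coroot (lam + lam') (Γ ++ Γ') := by
  refine ⟨fun α => ?_, fun α β γ p hαβ h k hk => hΓ.interchange_append hΓ' hαβ h hk⟩
  rw [List.count_append, Nat.cast_add, hΓ.1, hΓ'.1, AddMonoidHom.add_apply]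

end IsLamChain

/-- the concatenation `Γ ∗ Γ′` of a `λ`-chain and a `λ′`-chain is a
`(λ+λ′)`-chain; in particular, for indices in the second segment,
`N^{Γ∗Γ′}_{ι′}(α) = ⟨λ, α^∨⟩ + N^{Γ′}_{ι′}(α)`, and the interchange condition
holds at every position of `Γ ∗ Γ′` carrying `β`. -/
theorem stmt4 {R Q : Type} [DecidableEq R] [AddCommGroup Q]
    (coroot : R → Q) (lam lam' : Q →+ ℤ) (Γ Γ' : List R)
    (hΓ : IsLamChain coroot lam Γ) (hΓ' : IsLamChain coroot lam' Γ') :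
    IsLamChain coroot (lam + lam') (Γ ++ Γ') ∧
    (∀ (k : ℕ) (α : R), k ≤ Γ'.length →
      (Ncount (Γ ++ Γ') (Γ.length + k) α : ℤ) = lam (coroot α) + (Ncount Γ' k α : ℤ)) ∧
    (∀ (α β γ : R) (p : ℤ) (k : ℕ), α ≠ β → coroot γ = coroot α + p • coroot β →
      (Γ ++ Γ')[k]? = some β →
      (Ncount (Γ ++ Γ') k γ : ℤ)
        = (Ncount (Γ ++ Γ') k α : ℤ) + p * (Ncount (Γ ++ Γ') k β : ℤ)) :=
  ⟨hΓ.append hΓ', fun k α _ => hΓ.Ncount_append_length_add Γ' k α,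
    fun _ _ _ _ _ hαβ h hk => hΓ.interchange_append hΓ' hαβ h hk⟩
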